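/- Let K be an invertible real N×N matrix, σ > 0, and let Q, P, U : ℝ → Matrix (Fin N) (Fin N) ℝ with Q, P differentiable, U(t) skew-symmetric, and suppose the extremal equations K(Q'(t) − Q(t)U(t)) = σ²P(t) and P'(t) = P(t)U(t) hold for all t. Then M(t) := Q(t)ᵀP(t) − P(t)ᵀQ(t) satisfies M'(t) = M(t)U(t) − U(t)M(t) + σ²·P(t)ᵀ(K⁻ᵀ − K⁻¹)P(t), where K⁻ᵀ denotes the transpose of K⁻¹. -/

import Mathlib

/-!
Differentiating `M = QᵀP - PᵀQ` entrywise by the product rule and substituting `P' = PU` and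
`Q' = QU + D` gives `M' = MU - UM + (DᵀP - PᵀD)`, because `Uᵀ = -U`. The extremal equation
`KD = σ²P` with `K` invertible gives `D = σ²K⁻¹P`, so `DᵀP - PᵀD = σ²Pᵀ(K⁻ᵀ - K⁻¹)P`.
-/

open Matrix

namespace Matrix

section EntrywiseDeriv

variable {𝕜 𝔸 : Type*} [NontriviallyNormedField 𝕜] [NormedRing 𝔸] [NormedAlgebra 𝕜 𝔸]
  {l m n : Type*}

def HasEntrywiseDerivAt (A : 𝕜 → Matrix m n 𝔸) (A' : Matrix m n 𝔸) (t : 𝕜) : Prop :=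
  ∀ i j, HasDerivAt (fun s => A s i j) (A' i j) t

variable {A B : 𝕜 → Matrix m n 𝔸} {A' B' : Matrix m n 𝔸} {t : 𝕜}

theorem HasEntrywiseDerivAt.transpose (hA : HasEntrywiseDerivAt A A' t) :
    HasEntrywiseDerivAt (fun s => (A s)ᵀ) A'ᵀ t :=
  fun i j => hA j i

theorem HasEntrywiseDerivAt.sub (hA : HasEntrywiseDerivAt A A' t)
    (hB : HasEntrywiseDerivAt B B' t) :
    HasEntrywiseDerivAt (fun s => A s - B s) (A' - B') t :=
  fun i j => (hA i j).sub (hB i j)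

theorem HasEntrywiseDerivAt.mul [Fintype n] {C : 𝕜 → Matrix n l 𝔸} {C' : Matrix n l 𝔸}
    (hA : HasEntrywiseDerivAt A A' t) (hC : HasEntrywiseDerivAt C C' t) :
    HasEntrywiseDerivAt (fun s => A s * C s) (A' * C t + A t * C') t := by
  intro i j
  simp only [mul_apply, add_apply, ← Finset.sum_add_distrib]
  exact HasDerivAt.fun_sum fun k _ => (hA i k).fun_mul (hC k j)

end EntrywiseDeriv

variable {n R : Type*} [Fintype n] [CommRing R]

theorem leibniz_transpose_mul_sub_eq_commutator_add {Q Q' P U : Matrix n n R}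
    (hU : Uᵀ = -U) :
    (Q'ᵀ * P + Qᵀ * (P * U)) - ((P * U)ᵀ * Q + Pᵀ * Q')
      = (Qᵀ * P - Pᵀ * Q) * U - U * (Qᵀ * P - Pᵀ * Q)
        + ((Q' - Q * U)ᵀ * P - Pᵀ * (Q' - Q * U)) := by
  simp only [transpose_sub, transpose_mul, hU, Matrix.mul_sub, Matrix.sub_mul,
    Matrix.neg_mul, Matrix.mul_assoc]
  abel

theorem transpose_mul_sub_transpose_mul_of_mul_eq_smul [DecidableEq n] {K D P : Matrix n n R}
    (hK : IsUnit K) {c : R} (hD : K * D = c • P) :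
    Dᵀ * P - Pᵀ * D = c • (Pᵀ * (K⁻¹ᵀ - K⁻¹) * P) := by
  have hD' : D = c • (K⁻¹ * P) := by
    rw [← Matrix.mul_smul, ← hD,
      nonsing_inv_mul_cancel_left _ _ ((isUnit_iff_isUnit_det K).mp hK)]
  simp only [hD', transpose_smul, transpose_mul, Matrix.mul_sub, Matrix.sub_mul,
    Matrix.smul_mul, Matrix.mul_smul, smul_sub, Matrix.mul_assoc]

end Matrix

theorem metamorphosis_rigid_body_momentum_evolution_general
    {N : ℕ} (K : Matrix (Fin N) (Fin N) ℝ) (hK : IsUnit K)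
    (σ : ℝ)
    (Q P U Q' : ℝ → Matrix (Fin N) (Fin N) ℝ)
    (hskew : ∀ t : ℝ, (U t)ᵀ = -U t)
    (hQ : ∀ (t : ℝ) (i j : Fin N),
      HasDerivAt (fun s => Q s i j) (Q' t i j) t)
    (hKeq : ∀ t : ℝ, K * (Q' t - Q t * U t) = σ ^ 2 • P t)
    (hP : ∀ (t : ℝ) (i j : Fin N),
      HasDerivAt (fun s => P s i j) ((P t * U t) i j) t) :
    ∀ (t : ℝ) (i j : Fin N),
      HasDerivAt (fun s => ((Q s)ᵀ * P s - (P s)ᵀ * Q s) i j)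
        ((((Q t)ᵀ * P t - (P t)ᵀ * Q t) * U t
          - U t * ((Q t)ᵀ * P t - (P t)ᵀ * Q t)
          + σ ^ 2 • ((P t)ᵀ * ((K⁻¹)ᵀ - K⁻¹) * P t)) i j) t := by
  intro t
  have hQt : HasEntrywiseDerivAt Q (Q' t) t := hQ t
  have hPt : HasEntrywiseDerivAt P (P t * U t) t := hP t
  have hM := (hQt.transpose.mul hPt).sub (hPt.transpose.mul hQt)
  rwa [leibniz_transpose_mul_sub_eq_commutator_add (hskew t),
    transpose_mul_sub_transpose_mul_of_mul_eq_smul hK (hKeq t)] at hM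

/-- **Momentum evolution for the rigid-body optimization (metamorphosis)
extremals.**  If `K(Q' - QU) = σ²P` and `P' = PU` with `U(t)` skew-symmetric
and `K` invertible, then `M := QᵀP - PᵀQ` satisfies
`M' = MU - UM + σ²·Pᵀ(K⁻ᵀ - K⁻¹)P`, where `K⁻ᵀ = (K⁻¹)ᵀ`. -/
theorem metamorphosis_rigid_body_momentum_evolution
    {N : ℕ} (K : Matrix (Fin N) (Fin N) ℝ) (hK : IsUnit K)
    (σ : ℝ) (hσ : 0 < σ)
    (Q P U Q' : ℝ → Matrix (Fin N) (Fin N) ℝ)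
    (hskew : ∀ t : ℝ, (U t)ᵀ = -U t)
    (hQ : ∀ (t : ℝ) (i j : Fin N),
      HasDerivAt (fun s => Q s i j) (Q' t i j) t)
    (hKeq : ∀ t : ℝ, K * (Q' t - Q t * U t) = σ ^ 2 • P t)
    (hP : ∀ (t : ℝ) (i j : Fin N),
      HasDerivAt (fun s => P s i j) ((P t * U t) i j) t) :
    ∀ (t : ℝ) (i j : Fin N),
      HasDerivAt (fun s => ((Q s)ᵀ * P s - (P s)ᵀ * Q s) i j)
        ((((Q t)ᵀ * P t - (P t)ᵀ * Q t) * U t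
          - U t * ((Q t)ᵀ * P t - (P t)ᵀ * Q t)
          + σ ^ 2 • ((P t)ᵀ * ((K⁻¹)ᵀ - K⁻¹) * P t)) i j) t :=
  metamorphosis_rigid_body_momentum_evolution_general K hK σ Q P U Q' hskew hQ hKeq hP
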